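/- S(A,b) equals the union over all minimal solutions x̌ of the order intervals {x ∈ [0,1]^n : x̌ ≤ x ≤ (1,...,1)}. -/

import Mathlib

open Finset

noncomputable section

/-- Łukasiewicz t-norm. -/
def TL (a x : ℝ) : ℝ := max (a + x - 1) 0

/-- Solution set of the addition-Łukasiewicz system. -/
def Sset {m n : ℕ} (A : Fin m → Fin n → ℝ) (b : Fin m → ℝ) : Set (Fin n → ℝ) :=
  {x | (∀ j, x j ∈ Set.Icc (0:ℝ) 1) ∧ ∀ i, b i ≤ ∑ j, TL (A i j) (x j)}

/-- Minimal solution. -/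
def IsMinimalSol {m n : ℕ} (A : Fin m → Fin n → ℝ) (b : Fin m → ℝ) (x : Fin n → ℝ) : Prop :=
  x ∈ Sset A b ∧ ∀ y ∈ Sset A b, y ≤ x → y = x

/-- The set F_j(z). -/
def Fset {m n : ℕ} (A : Fin m → Fin n → ℝ) (b : Fin m → ℝ) (j : Fin n) (z : Fin n → ℝ) :
    Set ℝ :=
  {t | t ∈ Set.Icc (0:ℝ) 1 ∧
    ∀ i, b i ≤ TL (A i j) t + ∑ k ∈ Finset.univ.erase j, TL (A i k) (z k)}

/-- Objective Z(x) = max_j x_j. -/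
def Zf {n : ℕ} (x : Fin n → ℝ) : ℝ := ⨆ j, x j

/-- Optimal solution of the minimax problem. -/
def IsOptimal {m n : ℕ} (A : Fin m → Fin n → ℝ) (b : Fin m → ℝ) (x : Fin n → ℝ) : Prop :=
  x ∈ Sset A b ∧ ∀ y ∈ Sset A b, Zf x ≤ Zf y

/-!
Every solution lies above a minimal one: the solution set is compact, and a minimizer of `∑ j, y j`
over the solutions `y ≤ x` is minimal because the sum is strictly monotone. Conversely `TL a` is
monotone, so the solution set is an upper set inside `[0,1]^n`.
-/

theorem IsCompact.exists_minimal_le {ι : Type*} [Fintype ι] {s : Set (ι → ℝ)} (hs : IsCompact s)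
    {x : ι → ℝ} (hx : x ∈ s) : ∃ c, Minimal (· ∈ s) c ∧ c ≤ x := by
  obtain ⟨c, ⟨hcs, hcx⟩, hmin⟩ := (hs.inter_right isClosed_Iic).exists_isMinOn
    ⟨x, hx, Set.self_mem_Iic⟩ (continuous_finsetSum univ fun j _ => continuous_apply j).continuousOn
  refine ⟨c, ⟨hcs, fun y hys hyc => ?_⟩, hcx⟩
  obtain hlt | rfl := hyc.lt_or_eq
  · have hcy : ∑ j, c j ≤ ∑ j, y j := hmin ⟨hys, hyc.trans hcx⟩
    exact absurd (Fintype.sum_strictMono hlt) hcy.not_gt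
  · exact le_rfl

theorem TL_monotone (a : ℝ) : Monotone (TL a) :=
  fun _ _ h => max_le_max (by linarith) le_rfl

theorem continuous_TL (a : ℝ) : Continuous (TL a) := by
  unfold TL
  fun_prop

section Sset

variable {m n : ℕ} {A : Fin m → Fin n → ℝ} {b : Fin m → ℝ}

theorem Sset_subset_Icc : Sset A b ⊆ Set.Icc 0 1 :=
  fun _ hx => ⟨fun j => (hx.1 j).1, fun j => (hx.1 j).2⟩

theorem isClosed_Sset : IsClosed (Sset A b) := by
  simp only [Sset, Set.ofPred_and, Set.ofPred_forall]
  refine .inter (isClosed_iInter fun j => isClosed_Icc.preimage (continuous_apply j))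
    (isClosed_iInter fun i => isClosed_le continuous_const ?_)
  exact continuous_finsetSum univ fun j _ => (continuous_TL _).comp (continuous_apply j)

theorem isCompact_Sset : IsCompact (Sset A b) :=
  isCompact_Icc.of_isClosed_subset isClosed_Sset Sset_subset_Icc

theorem mem_Sset_of_le {c x : Fin n → ℝ} (hc : c ∈ Sset A b) (hcx : c ≤ x) (hx : x ≤ 1) :
    x ∈ Sset A b :=
  ⟨fun j => ⟨(hc.1 j).1.trans (hcx j), hx j⟩, fun i =>
    (hc.2 i).trans (sum_le_sum fun j _ => TL_monotone _ (hcx j))⟩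

theorem isMinimalSol_iff_minimal {c : Fin n → ℝ} :
    IsMinimalSol A b c ↔ Minimal (· ∈ Sset A b) c :=
  and_congr_right fun _ =>
    ⟨fun h _ hy hyc => (h _ hy hyc).ge, fun h _ hy hyc => le_antisymm hyc (h hy hyc)⟩

end Sset

theorem stmt14_general {m n : ℕ} (A : Fin m → Fin n → ℝ) (b : Fin m → ℝ) :
    Sset A b = ⋃ c ∈ {c | IsMinimalSol A b c}, Set.Icc c (fun _ : Fin n => (1:ℝ)) := by
  ext x
  simp only [Set.mem_iUnion, Set.mem_ofPred_eq, exists_prop, Set.mem_Icc]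
  constructor
  · intro hx
    obtain ⟨c, hc, hcx⟩ := isCompact_Sset.exists_minimal_le hx
    exact ⟨c, isMinimalSol_iff_minimal.2 hc, hcx, (Sset_subset_Icc hx).2⟩
  · rintro ⟨c, hc, hcx, hx⟩
    exact mem_Sset_of_le hc.1 hcx hx

theorem stmt14 {m n : ℕ} (A : Fin m → Fin n → ℝ) (b : Fin m → ℝ)
    (hA : ∀ i j, A i j ∈ Set.Icc (0:ℝ) 1) (hb : ∀ i, 0 < b i) :
    Sset A b = ⋃ c ∈ {c | IsMinimalSol A b c}, Set.Icc c (fun _ : Fin n => (1:ℝ)) :=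
  stmt14_general A b
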